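/- Let F be a field, H ∈ F^{p×p} with all eigenvalues in an extension field E of F, K ∈ F^{p×q}, and d ≥ deg μ_H. If there is a nonzero row vector u ∈ E^{1×p} with u[K, HK, …, H^{d−1}K] = 0, then there exist an eigenvalue λ of H and a nonzero row vector v ∈ E^{1×p} such that v(λI − H) = 0 and vK = 0. -/

import Mathlib

open Matrix Polynomial

/-!
The row vectors `w` with `w Aᵏ B = 0` for every `k` form a subspace that is invariant under
`w ↦ w A`. It contains `u`: reducing `Xᵏ` modulo `μ_H` writes every power of `H` as a combination
of `H⁰, …, H^(d-1)`. The minimal polynomial of `w ↦ w A` divides the split characteristic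
polynomial, hence so does that of its restriction to the subspace, which therefore has an
eigenvector `v`.
-/

theorem IsIntegral.map_pow_eq_zero_of_forall_lt {R S M : Type*} [CommRing R] [Nontrivial R]
    [Ring S] [Algebra R S] [AddCommGroup M] [Module R M] {a : S} (ha : IsIntegral R a)
    (φ : S →ₗ[R] M) {d : ℕ} (hd : (minpoly R a).natDegree ≤ d)
    (h : ∀ i < d, φ (a ^ i) = 0) (n : ℕ) : φ (a ^ n) = 0 := by
  have hspan : Submodule.span R (Set.range fun i : Fin (minpoly R a).natDegree => a ^ (i : ℕ))
      ≤ LinearMap.ker φ :=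
    Submodule.span_le.mpr <| Set.range_subset_iff.mpr fun i => h i (i.2.trans_le hd)
  exact hspan (ha.mem_span_pow ⟨X ^ n, by simp⟩)

namespace Module.End

section CommRing

variable {R M : Type*} [CommRing R] [AddCommGroup M] [Module R M]

/-- The largest `f`-invariant submodule contained in `N` (cf. `Subgroup.normalCore`). -/
def invtCore (f : End R M) (N : Submodule R M) : Submodule R M :=
  ⨅ n : ℕ, N.comap (f ^ n)

theorem mem_invtCore {f : End R M} {N : Submodule R M} {x : M} :
    x ∈ f.invtCore N ↔ ∀ n : ℕ, (f ^ n) x ∈ N := by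
  simp [invtCore, Submodule.mem_iInf]

theorem invtCore_le (f : End R M) (N : Submodule R M) : f.invtCore N ≤ N :=
  fun _ hx => by simpa using mem_invtCore.mp hx 0

theorem apply_mem_invtCore {f : End R M} {N : Submodule R M} {x : M}
    (hx : x ∈ f.invtCore N) : f x ∈ f.invtCore N := by
  refine mem_invtCore.mpr fun n => ?_
  simpa [pow_succ, mul_apply] using mem_invtCore.mp hx (n + 1)

theorem aeval_restrict_apply {f : End R M} {W : Submodule R M} (hW : ∀ x ∈ W, f x ∈ W)
    (P : R[X]) (x : W) : (aeval (f.restrict hW) P x : M) = aeval f P x := by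
  induction P using Polynomial.induction_on' with
  | add P Q hP hQ => simp [hP, hQ]
  | monomial k a => simp [aeval_monomial, pow_restrict k hW]

end CommRing

section Field

variable {K V : Type*} [Field K] [AddCommGroup V] [Module K V]

theorem minpoly_restrict_dvd (f : End K V) {W : Submodule K V} (hW : ∀ x ∈ W, f x ∈ W) :
    minpoly K (f.restrict hW) ∣ minpoly K f :=
  minpoly.dvd _ _ <| LinearMap.ext fun x => Subtype.ext <| by simp [aeval_restrict_apply]

theorem exists_hasEigenvector_mem_of_splits_minpoly [FiniteDimensional K V] {f : End K V}
    (hf : (minpoly K f).Splits) {W : Submodule K V} (hW : ∀ x ∈ W, f x ∈ W) (hW0 : W ≠ ⊥) :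
    ∃ μ : K, ∃ v ∈ W, f.HasEigenvector μ v := by
  have : Nontrivial W := Submodule.nontrivial_iff_ne_bot.mpr hW0
  set g := f.restrict hW
  have hg : (minpoly K g).Splits :=
    hf.of_dvd (minpoly.ne_zero (Algebra.IsIntegral.isIntegral f)) (minpoly_restrict_dvd f hW)
  obtain ⟨μ, hμ⟩ := hg.exists_eval_eq_zero
    (minpoly.degree_pos (Algebra.IsIntegral.isIntegral g)).ne'
  obtain ⟨v, hv⟩ := (hasEigenvalue_of_isRoot hμ).exists_hasEigenvector
  refine ⟨μ, v, v.2, mem_eigenspace_iff.mpr ?_, fun h => hv.2 (Subtype.ext h)⟩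
  simpa [g] using congrArg Subtype.val (mem_eigenspace_iff.mp hv.1)

end Field

end Module.End

theorem Matrix.exists_vecMul_eq_smul_of_forall_vecMul_pow_mul_eq_zero {K n m : Type*} [Field K]
    [Fintype n] [DecidableEq n] {A : Matrix n n K} (hA : A.charpoly.Splits) (B : Matrix n m K)
    {u : n → K} (hu : u ≠ 0) (huAB : ∀ k : ℕ, u ᵥ* (A ^ k * B) = 0) :
    ∃ μ : K, A.charpoly.IsRoot μ ∧ ∃ v ≠ 0, v ᵥ* A = μ • v ∧ v ᵥ* B = 0 := by
  set f : Module.End K (n → K) := toLin' Aᵀ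
  have hf_pow (k : ℕ) (v : n → K) : (f ^ k) v = v ᵥ* A ^ k := by
    simp [f, ← toLin'_pow, ← transpose_pow, mulVec_transpose]
  have hcharpoly : f.charpoly = A.charpoly := by simp [f, charpoly_transpose]
  set W := f.invtCore (LinearMap.ker (toLin' Bᵀ))
  have huW : u ∈ W := Module.End.mem_invtCore.mpr fun k => by
    simpa [hf_pow, mulVec_transpose, vecMul_vecMul] using huAB k
  obtain ⟨μ, v, hvW, hv⟩ := Module.End.exists_hasEigenvector_mem_of_splits_minpoly
    (hA.of_dvd A.charpoly_monic.ne_zero (hcharpoly ▸ LinearMap.minpoly_dvd_charpoly f))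
    (fun _ => Module.End.apply_mem_invtCore) ((Submodule.ne_bot_iff W).mpr ⟨u, huW, hu⟩)
  refine ⟨μ, hcharpoly ▸ (Module.End.hasEigenvalue_iff_isRoot_charpoly f μ).mp
    (Module.End.hasEigenvalue_of_hasEigenvector hv), v, hv.2, ?_, ?_⟩
  · rw [← pow_one A, ← hf_pow, pow_one]
    exact hv.apply_eq_smul
  · simpa [mulVec_transpose] using Module.End.invtCore_le _ _ hvW

/-- If a nonzero row vector u over E annihilates [K, HK, …, H^{d-1}K]
(d ≥ deg μ_H), then some eigenvalue λ of H admits a nonzero row vector v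
with v(λI − H) = 0 and vK = 0. -/
theorem exists_eigen_row_of_vecMul_ctrb_eq_zero
    {F E : Type*} [Field F] [Field E] [Algebra F E] {p q : ℕ}
    (H : Matrix (Fin p) (Fin p) F) (K : Matrix (Fin p) (Fin q) F)
    (hsplit : Polynomial.Splits (H.charpoly.map (algebraMap F E)))
    (d : ℕ) (hd : (minpoly F H).natDegree ≤ d)
    (u : Fin p → E) (hu : u ≠ 0)
    (huC : Matrix.vecMul u ((Matrix.of fun (i : Fin p) (dq : Fin d × Fin q) =>
      (H ^ (dq.1 : ℕ) * K) i dq.2).map (algebraMap F E)) = 0) :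
    ∃ lam : E, (Polynomial.aeval lam) H.charpoly = 0 ∧
      ∃ v : Fin p → E, v ≠ 0 ∧
        Matrix.vecMul v (lam • (1 : Matrix (Fin p) (Fin p) E) - H.map (algebraMap F E)) = 0 ∧
        Matrix.vecMul v (K.map (algebraMap F E)) = 0 := by
  set A := H.map (algebraMap F E)
  set B := K.map (algebraMap F E)
  -- `φ M = u ᵥ* M_E ᵥ* B` is `F`-linear, so powers of `H` can be reduced modulo `μ_H` over `F`.
  let φ : Matrix (Fin p) (Fin p) F →ₗ[F] Fin q → E :=
    (vecMulLinear B ∘ₗ vecMulBilin E E u).restrictScalars F ∘ₗ (Algebra.linearMap F E).mapMatrix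
  have hmap (k : ℕ) : (H ^ k * K).map (algebraMap F E) = A ^ k * B := by
    rw [Matrix.map_mul, ← RingHom.mapMatrix_apply, map_pow]; rfl
  have hφ (k : ℕ) : φ (H ^ k) = u ᵥ* (A ^ k * B) := by
    rw [← hmap, Matrix.map_mul, ← vecMul_vecMul]; rfl
  have hlt (i : ℕ) (hi : i < d) : φ (H ^ i) = 0 := by
    rw [hφ, ← hmap]
    ext c
    simpa [vecMul, dotProduct] using congr_fun huC (⟨i, hi⟩, c)
  have hall (k : ℕ) : u ᵥ* (A ^ k * B) = 0 :=
    hφ k ▸ (Matrix.isIntegral H).map_pow_eq_zero_of_forall_lt φ hd hlt k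
  obtain ⟨μ, hμ, v, hv, hvA, hvB⟩ := exists_vecMul_eq_smul_of_forall_vecMul_pow_mul_eq_zero
    (by rwa [charpoly_map]) B hu hall
  refine ⟨μ, by rwa [aeval_def, ← eval_map, ← charpoly_map], v, hv, ?_, hvB⟩
  rw [vecMul_sub, vecMul_smul, vecMul_one, hvA, sub_self]
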